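/- arXiv:1412.3442 — 2 statements merged into one kernel-verified Lean document; each statement's English description precedes it below -/
import Mathlib

section
/- Let X and Y be integrable real random variables with X ≤_cx Y, let α ∈ ℝ, and suppose h ∈ [0,1] satisfies h·(x−α) ≤ φ_Y(x) for all x ∈ ℝ, where φ_Y(x) = E[(x−Y)₊]. If h is the largest such value (capped at 1), then F_X(α) ≤ h, where F_X is the cdf of X. -/
open MeasureTheory Set

lemma convexOn_max_sub_zero (x : ℝ) : ConvexOn ℝ univ (fun t : ℝ => max (x - t) 0) :=
  ((convexOn_const x convex_univ).sub (concaveOn_id convex_univ)).sup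
    (convexOn_const 0 convex_univ)

/-- Markov's inequality for `(x - X)₊`, which is at least `x - α` on `{X ≤ α}`. -/
lemma measureReal_le_mul_sub_le_integral_max_sub {Ω : Type*} [MeasurableSpace Ω]
    {μ : Measure Ω} [IsFiniteMeasure μ] {X : Ω → ℝ} (hX : Integrable X μ) (α x : ℝ) :
    μ.real {ω | X ω ≤ α} * (x - α) ≤ ∫ ω, max (x - X ω) 0 ∂μ := by
  rcases le_or_gt x α with hxα | hαx
  · exact (mul_nonpos_of_nonneg_of_nonpos measureReal_nonneg (sub_nonpos.mpr hxα)).trans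
      (integral_nonneg fun ω => le_max_right _ _)
  have hsub : {ω | X ω ≤ α} ⊆ {ω | x - α ≤ max (x - X ω) 0} := fun ω (hω : X ω ≤ α) =>
    le_max_of_le_left (sub_le_sub_left hω x)
  calc μ.real {ω | X ω ≤ α} * (x - α)
      ≤ (x - α) * μ.real {ω | x - α ≤ max (x - X ω) 0} := by
        rw [mul_comm]
        exact mul_le_mul_of_nonneg_left (measureReal_mono hsub) (sub_nonneg.mpr hαx.le)
    _ ≤ ∫ ω, max (x - X ω) 0 ∂μ :=
        mul_meas_ge_le_integral_of_nonneg (ae_of_all _ fun ω => le_max_right _ _)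
          ((integrable_const x).sub hX).pos_part _

lemma integral_max_sub_le_of_convexOrder {Ω : Type*} [MeasurableSpace Ω] {μ : Measure Ω}
    [IsFiniteMeasure μ] {X Y : Ω → ℝ} (hX : Integrable X μ) (hY : Integrable Y μ)
    (hcx : ∀ g : ℝ → ℝ, ConvexOn ℝ univ g →
      Integrable (fun ω => g (X ω)) μ → Integrable (fun ω => g (Y ω)) μ →
      ∫ ω, g (X ω) ∂μ ≤ ∫ ω, g (Y ω) ∂μ) (x : ℝ) :
    ∫ ω, max (x - X ω) 0 ∂μ ≤ ∫ ω, max (x - Y ω) 0 ∂μ :=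
  hcx _ (convexOn_max_sub_zero x) ((integrable_const x).sub hX).pos_part
    ((integrable_const x).sub hY).pos_part

theorem cdf_bound_from_convex_order_general
    {Ω : Type*} [MeasurableSpace Ω] (μ : Measure Ω) [IsProbabilityMeasure μ]
    (X Y : Ω → ℝ)
    (hX : Integrable X μ) (hY : Integrable Y μ)
    (hcx : ∀ g : ℝ → ℝ, ConvexOn ℝ Set.univ g →
      Integrable (fun ω : Ω => g (X ω)) μ → Integrable (fun ω : Ω => g (Y ω)) μ →
      ∫ ω, g (X ω) ∂μ ≤ ∫ ω, g (Y ω) ∂μ)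
    (α : ℝ) (h : ℝ)
    (hmax : ∀ w : ℝ, (∀ x : ℝ, w * (x - α) ≤ ∫ ω, max (x - Y ω) 0 ∂μ) →
      w ≤ h ∨ 1 ≤ h) :
    (μ {ω | X ω ≤ α}).toReal ≤ h := by
  have hfeas : ∀ x : ℝ, μ.real {ω | X ω ≤ α} * (x - α) ≤ ∫ ω, max (x - Y ω) 0 ∂μ := fun x =>
    (measureReal_le_mul_sub_le_integral_max_sub hX α x).trans
      (integral_max_sub_le_of_convexOrder hX hY hcx x)
  rcases hmax _ hfeas with hle | hone
  · exact hle
  · exact measureReal_le_one.trans hone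

/-- If `X ≤_cx Y`, `α ∈ ℝ`, and `h` is the largest value in `[0,1]`
such that `h·(x−α) ≤ φ_Y(x) = E[(x−Y)₊]` for all `x`, then `F_X(α) ≤ h`. -/
theorem cdf_bound_from_convex_order
    {Ω : Type*} [MeasurableSpace Ω] (μ : Measure Ω) [IsProbabilityMeasure μ]
    (X Y : Ω → ℝ) (hXmeas : Measurable X) (hYmeas : Measurable Y)
    (hX : Integrable X μ) (hY : Integrable Y μ)
    (hcx : ∀ g : ℝ → ℝ, ConvexOn ℝ Set.univ g →
      Integrable (fun ω : Ω => g (X ω)) μ → Integrable (fun ω : Ω => g (Y ω)) μ →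
      ∫ ω, g (X ω) ∂μ ≤ ∫ ω, g (Y ω) ∂μ)
    (α : ℝ) (h : ℝ) (hmem : h ∈ Icc (0 : ℝ) 1)
    (hfeas : ∀ x : ℝ, h * (x - α) ≤ ∫ ω, max (x - Y ω) 0 ∂μ)
    (hmax : ∀ w : ℝ, (∀ x : ℝ, w * (x - α) ≤ ∫ ω, max (x - Y ω) 0 ∂μ) →
      w ≤ h ∨ 1 ≤ h) :
    (μ {ω | X ω ≤ α}).toReal ≤ h :=
  cdf_bound_from_convex_order_general μ X Y hX hY hcx α h hmax
end

section
/- Let P₁,…,P_m be independent sub-uniform random variables (each ≤_cx Uniform[0,1]). Then for x ≥ 2m, P(−2·Σᵢ log Pᵢ ≥ x) ≤ S_{2m}(x − 2m·log 2), where S_{2m} is the survival function of a chi-squared distribution with 2m degrees of freedom. -/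
open MeasureTheory Set ProbabilityTheory Real
open scoped ENNReal

/-!
Testing a sub-uniform `P` against the convex hinge `u ↦ max (2α - u) 0` gives
`P(P ≤ α) ≤ 2α`, i.e. `-2 log P - 2 log 2` is stochastically dominated by the exponential
distribution of rate `1/2` (the chi-squared distribution with two degrees of freedom).
The usual stochastic order is preserved by convolution, and `Exp(1/2) ∗ Γ(k, 1/2) = Γ(k+1, 1/2)`,
so by independence the shifted sum `-2 Σ log Pᵢ - 2m log 2` is dominated by `Γ(m, 1/2)`.
-/

def StochasticallyLE (ν ρ : Measure ℝ) : Prop := ∀ t, ν (Ici t) ≤ ρ (Ici t)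

theorem MeasureTheory.Measure.conv_apply_Ici (ν ρ : Measure ℝ) [SFinite ρ] (t : ℝ) :
    (ν ∗ ρ) (Ici t) = ∫⁻ a, ρ (Ici (t - a)) ∂ν := by
  rw [← lintegral_indicator_one measurableSet_Ici,
    Measure.lintegral_conv (measurable_one.indicator measurableSet_Ici)]
  refine lintegral_congr fun a => ?_
  rw [← lintegral_indicator_one measurableSet_Ici]
  congr 1 with b
  simp only [indicator, mem_Ici, Pi.one_apply, sub_le_iff_le_add']

namespace StochasticallyLE

variable {ν ρ κ ν' ρ' : Measure ℝ}

theorem trans (h : StochasticallyLE ν ρ) (h' : StochasticallyLE ρ κ) : StochasticallyLE ν κ :=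
  fun t => (h t).trans (h' t)

theorem conv_left (h : StochasticallyLE ν ρ) (μ : Measure ℝ) [SFinite ν] [SFinite ρ] :
    StochasticallyLE (μ ∗ ν) (μ ∗ ρ) := fun t => by
  simp only [Measure.conv_apply_Ici]
  exact lintegral_mono fun a => h _

-- Convolution is commutative, so `ν ∗ ν' ≤ ν ∗ ρ' = ρ' ∗ ν ≤ ρ' ∗ ρ`.
theorem conv (h : StochasticallyLE ν ρ) (h' : StochasticallyLE ν' ρ') [SFinite ν] [SFinite ρ]
    [SFinite ν'] [SFinite ρ'] : StochasticallyLE (ν ∗ ν') (ρ ∗ ρ') := by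
  have h₂ := h.conv_left ρ'
  rw [Measure.conv_comm ρ' ν, Measure.conv_comm ρ' ρ] at h₂
  exact (h'.conv_left ν).trans h₂

end StochasticallyLE

theorem MeasureTheory.Measure.withDensity_conv_withDensity {G : Type*} [AddCommGroup G]
    [MeasurableSpace G] [MeasurableAdd₂ G] [MeasurableSub₂ G] (μ : Measure G) [SFinite μ]
    [μ.IsAddLeftInvariant] {f g : G → ℝ≥0∞} (hf : Measurable f) (hg : Measurable g) :
    μ.withDensity f ∗ μ.withDensity g = μ.withDensity (fun x => ∫⁻ y, f y * g (x - y) ∂μ) := by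
  refine Measure.ext_of_lintegral _ fun φ hφ => ?_
  rw [Measure.lintegral_conv hφ, lintegral_withDensity_eq_lintegral_mul _ hf (by fun_prop),
    lintegral_withDensity_eq_lintegral_mul _ (by fun_prop) hφ]
  calc ∫⁻ y, (f * fun y => ∫⁻ z, φ (y + z) ∂μ.withDensity g) y ∂μ
      = ∫⁻ y, ∫⁻ x, f y * g (x - y) * φ x ∂μ ∂μ := by
        refine lintegral_congr fun y => ?_
        rw [Pi.mul_apply, lintegral_withDensity_eq_lintegral_mul _ hg (by fun_prop),
          ← lintegral_add_left_eq_self _ (-y), ← lintegral_const_mul _ (by fun_prop)]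
        simp [mul_assoc, sub_eq_neg_add]
    _ = ∫⁻ x, (fun x => ∫⁻ y, f y * g (x - y) ∂μ) x * φ x ∂μ := by
        rw [lintegral_lintegral_swap (by fun_prop)]
        exact lintegral_congr fun x => lintegral_mul_const (φ x) (by fun_prop)

theorem integral_sub_rpow {a x : ℝ} (ha : 0 < a) :
    ∫ y in (0 : ℝ)..x, (x - y) ^ (a - 1) = x ^ a / a := by
  rw [intervalIntegral.integral_comp_sub_left (fun u => u ^ (a - 1)), sub_self, sub_zero,
    integral_rpow (Or.inl (by linarith)), sub_add_cancel, zero_rpow ha.ne', sub_zero]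

theorem lintegral_exponentialPDF_mul_gammaPDF_sub {a r : ℝ} (ha : 0 < a) (hr : 0 < r) (x : ℝ) :
    ∫⁻ y, exponentialPDF r y * gammaPDF a r (x - y) = gammaPDF (a + 1) r x := by
  rcases lt_or_ge x 0 with hx | hx
  · rw [gammaPDF_of_neg hx]
    refine lintegral_eq_zero_of_ae_eq_zero (ae_of_all _ fun y => ?_)
    rcases lt_or_ge y 0 with hy | hy
    · simp [exponentialPDF_of_neg hy]
    · simp [gammaPDF_of_neg (show x - y < 0 by linarith)]
  set c := r ^ (a + 1) / Gamma a * exp (-(r * x)) with hc_def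
  have hc : 0 ≤ c := by have := Gamma_pos_of_pos ha; positivity
  have hpt : ∀ y, exponentialPDF r y * gammaPDF a r (x - y)
      = (Icc 0 x).indicator (fun y => ENNReal.ofReal (c * (x - y) ^ (a - 1))) y := by
    intro y
    by_cases hy : y ∈ Icc 0 x
    · rw [indicator_of_mem hy, exponentialPDF_of_nonneg hy.1,
        gammaPDF_of_nonneg (sub_nonneg.2 hy.2), ← ENNReal.ofReal_mul (by positivity), hc_def,
        rpow_add_one hr.ne', show -(r * x) = -(r * y) + -(r * (x - y)) by ring, exp_add]
      ring_nf
    · rw [indicator_of_notMem hy]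
      rcases lt_or_ge y 0 with hy' | hy'
      · rw [exponentialPDF_of_neg hy', zero_mul]
      · rw [gammaPDF_of_neg (by simp_all), mul_zero]
  have hint : IntegrableOn (fun y => c * (x - y) ^ (a - 1)) (Icc 0 x) := by
    rw [integrableOn_Icc_iff_integrableOn_Ioc, ← intervalIntegrable_iff_integrableOn_Ioc_of_le hx]
    refine IntervalIntegrable.const_mul ?_ c
    simpa using ((intervalIntegral.intervalIntegrable_rpow' (r := a - 1) (a := 0) (b := x)
      (by linarith)).comp_sub_left x).symm
  have hnn : 0 ≤ᵐ[volume.restrict (Icc 0 x)] fun y => c * (x - y) ^ (a - 1) :=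
    (ae_restrict_iff' measurableSet_Icc).2 <| ae_of_all _ fun y hy =>
      mul_nonneg hc (rpow_nonneg (sub_nonneg.2 hy.2) _)
  rw [lintegral_congr hpt, lintegral_indicator measurableSet_Icc,
    ← ofReal_integral_eq_lintegral_ofReal hint hnn, integral_Icc_eq_integral_Ioc,
    ← intervalIntegral.integral_of_le hx, intervalIntegral.integral_const_mul, integral_sub_rpow ha,
    gammaPDF_of_nonneg hx, Gamma_add_one ha.ne', add_sub_cancel_right, hc_def]
  congr 1
  field_simp

instance (a r : ℝ) : SFinite (gammaMeasure a r) :=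
  inferInstanceAs (SFinite (volume.withDensity _))

instance (a r : ℝ) : NullSingletonClass (gammaMeasure a r) :=
  inferInstanceAs (NullSingletonClass (volume.withDensity _))

theorem expMeasure_conv_gammaMeasure {a r : ℝ} (ha : 0 < a) (hr : 0 < r) :
    expMeasure r ∗ gammaMeasure a r = gammaMeasure (a + 1) r := by
  change volume.withDensity (exponentialPDF r) ∗ volume.withDensity (gammaPDF a r) = _
  rw [Measure.withDensity_conv_withDensity (f := exponentialPDF r) (g := gammaPDF a r) _
    (measurable_exponentialPDFReal r).ennreal_ofReal (measurable_gammaPDFReal a r).ennreal_ofReal]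
  exact congrArg _ (funext (lintegral_exponentialPDF_mul_gammaPDF_sub ha hr))

theorem expMeasure_Ici {r t : ℝ} (hr : 0 < r) (ht : 0 ≤ t) :
    expMeasure r (Ici t) = ENNReal.ofReal (exp (-(r * t))) := by
  have := isProbabilityMeasure_expMeasure hr
  have : NullSingletonClass (expMeasure r) :=
    inferInstanceAs (NullSingletonClass (gammaMeasure 1 r))
  have hexp : exp (-(r * t)) ≤ 1 := exp_le_one_iff.2 (by nlinarith)
  rw [← measure_congr Ioi_ae_eq_Ici, ← compl_Iic,
    prob_compl_eq_one_sub measurableSet_Iic, ← ofReal_cdf, cdf_expMeasure_eq hr, if_pos ht,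
    ← ENNReal.ofReal_one, ← ENNReal.ofReal_sub _ (sub_nonneg.2 hexp), sub_sub_cancel]

theorem setIntegral_Icc_max_sub_zero {c : ℝ} (hc₀ : 0 ≤ c) (hc₁ : c ≤ 1) :
    ∫ u in Icc (0 : ℝ) 1, max (c - u) 0 = c ^ 2 / 2 := by
  have hcont : Continuous fun u : ℝ => max (c - u) 0 := by fun_prop
  have h₁ : ∫ u in (0 : ℝ)..c, max (c - u) 0 = ∫ u in (0 : ℝ)..c, (c - u) :=
    intervalIntegral.integral_congr fun u hu => by
      rw [uIcc_of_le hc₀] at hu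
      exact max_eq_left (by linarith [hu.2])
  have h₂ : ∫ u in c..1, max (c - u) 0 = 0 := by
    rw [intervalIntegral.integral_congr (g := fun _ => 0) fun u hu => ?_,
      intervalIntegral.integral_zero]
    rw [uIcc_of_le hc₁] at hu
    exact max_eq_right (by linarith [hu.1])
  rw [integral_Icc_eq_integral_Ioc, ← intervalIntegral.integral_of_le zero_le_one,
    ← intervalIntegral.integral_add_adjacent_intervals (b := c)
      (hcont.intervalIntegrable _ _) (hcont.intervalIntegrable _ _), h₁, h₂,
    intervalIntegral.integral_comp_sub_left (fun u => u), integral_id]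
  simp

/-- `p` is dominated by the uniform distribution on `[0, 1]` in the convex order, tested against
the convex functions for which both sides are integrable. -/
def IsSubUniform {Ω : Type*} [MeasurableSpace Ω] (μ : Measure Ω) (p : Ω → ℝ) : Prop :=
  ∀ h : ℝ → ℝ, ConvexOn ℝ univ h → Integrable (fun ω => h (p ω)) μ →
    IntegrableOn h (Icc (0 : ℝ) 1) volume → ∫ ω, h (p ω) ∂μ ≤ ∫ u in Icc (0 : ℝ) 1, h u

theorem IsSubUniform.measure_le_le_two_mul {Ω : Type*} [MeasurableSpace Ω] {μ : Measure Ω}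
    [IsProbabilityMeasure μ] {p : Ω → ℝ} (hp : IsSubUniform μ p) (hmeas : Measurable p)
    (hnn : ∀ ω, 0 ≤ p ω) {α : ℝ} (hα : 0 < α) :
    μ {ω | p ω ≤ α} ≤ ENNReal.ofReal (2 * α) := by
  rcases lt_or_ge (1 / 2) α with hα' | hα'
  · exact prob_le_one.trans (ENNReal.one_le_ofReal.2 (by linarith))
  set h : ℝ → ℝ := fun u => max (2 * α - u) 0
  have hconv : ConvexOn ℝ univ h :=
    ((convexOn_const (2 * α) convex_univ).sub (concaveOn_id convex_univ)).sup
      (convexOn_const 0 convex_univ)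
  have hcont : Continuous h := by fun_prop
  have hint : Integrable (fun ω => h (p ω)) μ := by
    refine Integrable.of_bound (C := 2 * α) (by fun_prop) (ae_of_all _ fun ω => ?_)
    rw [Real.norm_eq_abs, abs_of_nonneg (le_max_right _ _)]
    exact max_le (by linarith [hnn ω]) (by positivity)
  have hsub : {ω | p ω ≤ α} ⊆ {ω | α ≤ h (p ω)} := fun ω (hω : p ω ≤ α) =>
    show α ≤ max (2 * α - p ω) 0 from le_max_of_le_left (by linarith)
  have hmarkov : α * μ.real {ω | p ω ≤ α} ≤ α * (2 * α) :=
    calc α * μ.real {ω | p ω ≤ α} ≤ α * μ.real {ω | α ≤ h (p ω)} :=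
        mul_le_mul_of_nonneg_left (measureReal_mono hsub) hα.le
      _ ≤ ∫ ω, h (p ω) ∂μ :=
        mul_meas_ge_le_integral_of_nonneg (ae_of_all _ fun _ => le_max_right _ _) hint α
      _ ≤ ∫ u in Icc (0 : ℝ) 1, h u := hp h hconv hint hcont.integrableOn_Icc
      _ = α * (2 * α) := by rw [setIntegral_Icc_max_sub_zero (by positivity) (by linarith)]; ring
  exact (ENNReal.le_ofReal_iff_toReal_le (measure_ne_top μ _) (by positivity)).2
    (le_of_mul_le_mul_left hmarkov hα)

theorem IsSubUniform.stochasticallyLE_expMeasure {Ω : Type*} [MeasurableSpace Ω]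
    {μ : Measure Ω} [IsProbabilityMeasure μ] {p : Ω → ℝ} (hp : IsSubUniform μ p)
    (hmeas : Measurable p) (hnn : ∀ ω, 0 ≤ p ω) :
    StochasticallyLE (μ.map fun ω => -2 * log (p ω) - 2 * log 2) (expMeasure (1 / 2)) := by
  intro t
  rw [Measure.map_apply (by fun_prop) measurableSet_Ici]
  rcases le_or_gt t 0 with ht | ht
  · calc μ _ ≤ 1 := prob_le_one
      _ = expMeasure (1 / 2) (Ici 0) := by simp [expMeasure_Ici]
      _ ≤ expMeasure (1 / 2) (Ici t) := measure_mono (Ici_subset_Ici.2 ht)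
  have hsub : (fun ω => -2 * log (p ω) - 2 * log 2) ⁻¹' Ici t ⊆
      {ω | p ω ≤ exp (-(t / 2)) / 2} := by
    intro ω (hω : t ≤ -2 * log (p ω) - 2 * log 2)
    rcases (hnn ω).eq_or_lt with h0 | hpos
    · show p ω ≤ _
      rw [← h0]
      positivity
    · have hlog : log (2 * p ω) ≤ -(t / 2) := by
        rw [log_mul two_ne_zero hpos.ne']
        linarith
      have := (log_le_iff_le_exp (by positivity)).1 hlog
      exact (le_div_iff₀' two_pos).2 this
  calc μ _ ≤ μ {ω | p ω ≤ exp (-(t / 2)) / 2} := measure_mono hsub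
    _ ≤ ENNReal.ofReal (2 * (exp (-(t / 2)) / 2)) :=
        hp.measure_le_le_two_mul hmeas hnn (by positivity)
    _ = expMeasure (1 / 2) (Ici t) := by
        rw [expMeasure_Ici (by norm_num) ht.le]
        ring_nf

theorem ProbabilityTheory.iIndepFun.stochasticallyLE_gammaMeasure_sum {Ω ι : Type*}
    [MeasurableSpace Ω] {μ : Measure Ω} [IsProbabilityMeasure μ] {Y : ι → Ω → ℝ} {r : ℝ}
    (hr : 0 < r) (hY : iIndepFun Y μ) (hmeas : ∀ i, Measurable (Y i))
    (hdom : ∀ i, StochasticallyLE (μ.map (Y i)) (expMeasure r)) {s : Finset ι}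
    (hs : s.Nonempty) : StochasticallyLE (μ.map (∑ i ∈ s, Y i)) (gammaMeasure s.card r) := by
  have := isProbabilityMeasure_expMeasure hr
  induction hs using Finset.Nonempty.cons_induction with
  | singleton i => simpa [expMeasure] using hdom i
  | cons i s hi hs ih =>
    rw [Finset.sum_cons, Finset.card_cons, Nat.cast_succ, add_comm (Y i),
      (hY.indepFun_finsetSum_of_notMem hmeas hi).map_add_eq_map_conv_map
        (by fun_prop) (hmeas i),
      ← expMeasure_conv_gammaMeasure (by simpa using hs.card_pos) hr,
      Measure.conv_comm (expMeasure r)]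
    exact ih.conv (hdom i)

theorem fisher_bound_chi_squared_general
    {Ω : Type*} [MeasurableSpace Ω] (μ : Measure Ω) [IsProbabilityMeasure μ]
    (m : ℕ) (hm : 0 < m) (P : Fin m → Ω → ℝ)
    (hPmeas : ∀ i, Measurable (P i))
    (hPmem : ∀ i ω, P i ω ∈ Icc (0 : ℝ) 1)
    (hindep : iIndepFun (m := fun _ => (inferInstance : MeasurableSpace ℝ)) P μ)
    (hcx : ∀ i, ∀ h : ℝ → ℝ, ConvexOn ℝ Set.univ h →
      Integrable (fun ω : Ω => h (P i ω)) μ → IntegrableOn h (Icc (0 : ℝ) 1) volume →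
      ∫ ω, h (P i ω) ∂μ ≤ ∫ u in Icc (0 : ℝ) 1, h u)
    (x : ℝ) :
    μ {ω | x ≤ -2 * ∑ i, Real.log (P i ω)}
      ≤ gammaMeasure m (1 / 2) (Ioi (x - 2 * m * Real.log 2)) := by
  set Y : Fin m → Ω → ℝ := fun i ω => -2 * log (P i ω) - 2 * log 2
  have hYmeas : ∀ i, Measurable (Y i) := fun i => by fun_prop
  have hsum := iIndepFun.stochasticallyLE_gammaMeasure_sum (Y := Y) (by norm_num)
    (hindep.comp (fun _ z => -2 * log z - 2 * log 2) fun _ => by fun_prop) hYmeas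
    (fun i => IsSubUniform.stochasticallyLE_expMeasure (hcx i) (hPmeas i) fun ω => (hPmem i ω).1)
    (Finset.univ_nonempty_iff.2 ⟨⟨0, hm⟩⟩)
  have hsumY (ω : Ω) : (∑ i, Y i) ω = -2 * ∑ i, log (P i ω) - 2 * m * log 2 := by
    simp only [Y, Finset.sum_apply, Finset.sum_sub_distrib, ← Finset.mul_sum, Finset.sum_const,
      Finset.card_univ, Fintype.card_fin, nsmul_eq_mul]
    ring
  have hset : {ω | x ≤ -2 * ∑ i, log (P i ω)} = (∑ i, Y i) ⁻¹' Ici (x - 2 * m * log 2) := by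
    ext ω
    rw [mem_preimage, mem_Ici, hsumY, sub_le_sub_iff_right, mem_ofPred_eq]
  rw [hset, ← Measure.map_apply (by fun_prop) measurableSet_Ici, measure_congr Ioi_ae_eq_Ici]
  simpa using hsum (x - 2 * m * log 2)

/-- For independent sub-uniform `P₁,…,P_m` and `x ≥ 2m`,
`P(−2·Σ log Pᵢ ≥ x) ≤ S_{2m}(x − 2m·log 2)`, where `S_{2m}` is the survival
function of a chi-squared with `2m` degrees of freedom (a Gamma distribution
with shape `m` and rate `1/2`). -/
theorem fisher_bound_chi_squared
    {Ω : Type*} [MeasurableSpace Ω] (μ : Measure Ω) [IsProbabilityMeasure μ]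
    (m : ℕ) (hm : 0 < m) (P : Fin m → Ω → ℝ)
    (hPmeas : ∀ i, Measurable (P i))
    (hPmem : ∀ i ω, P i ω ∈ Icc (0 : ℝ) 1)
    (hindep : iIndepFun (m := fun _ => (inferInstance : MeasurableSpace ℝ)) P μ)
    (hcx : ∀ i, ∀ h : ℝ → ℝ, ConvexOn ℝ Set.univ h →
      Integrable (fun ω : Ω => h (P i ω)) μ → IntegrableOn h (Icc (0 : ℝ) 1) volume →
      ∫ ω, h (P i ω) ∂μ ≤ ∫ u in Icc (0 : ℝ) 1, h u)
    (x : ℝ) (hx : 2 * m ≤ x) :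
    μ {ω | x ≤ -2 * ∑ i, Real.log (P i ω)}
      ≤ gammaMeasure m (1 / 2) (Ioi (x - 2 * m * Real.log 2)) :=
  fisher_bound_chi_squared_general μ m hm P hPmeas hPmem hindep hcx x
end
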